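/- arXiv:2309.17262 — 3 statements merged into one kernel-verified Lean document; each statement's English description precedes it below -/
import Mathlib

section
/- Let μ be a probability measure on ℝ with finite first moment admitting a Lebesgue density bounded above by a constant C > 0. Then for any probability measure ν on ℝ with finite first moment, KS(μ, ν) ≤ √(2 · C · W₁(μ, ν)), where KS(μ,ν) = sup_{t∈ℝ} |μ((-∞,t]) − ν((-∞,t])| is the Kolmogorov–Smirnov distance and W₁ is the 1-Wasserstein distance. -/
open MeasureTheory Set
open scoped ENNReal

/-- The 1-Wasserstein distance between two measures on `ℝ`, defined as the
infimum over couplings of the expected distance. -/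
noncomputable def W1 (μ ν : Measure ℝ) : ℝ≥0∞ :=
  ⨅ (κ : Measure (ℝ × ℝ)) (_ : κ.map Prod.fst = μ ∧ κ.map Prod.snd = ν),
    ∫⁻ q, edist q.1 q.2 ∂κ

/-- The Kolmogorov–Smirnov distance between two measures on `ℝ`. -/
noncomputable def KS (μ ν : Measure ℝ) : ℝ :=
  ⨆ t : ℝ, |(μ (Set.Iic t)).toReal - (ν (Set.Iic t)).toReal|

open Function

lemma gen_lin_int (C k a b : ℝ) : ∫ u in a..b, (k - C*u) = k*(b-a) - C*((b^2-a^2)/2) := by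
  rw [intervalIntegral.integral_sub intervalIntegrable_const
      ((by continuity : Continuous fun u : ℝ => C * u).intervalIntegrable _ _),
    intervalIntegral.integral_const_mul, integral_id,
    intervalIntegral.integral_const]
  simp [smul_eq_mul]; ring

lemma gen_lin_int' (C k a b : ℝ) : ∫ u in a..b, (k + C*u) = k*(b-a) + C*((b^2-a^2)/2) := by
  rw [intervalIntegral.integral_add intervalIntegrable_const
      ((by continuity : Continuous fun u : ℝ => C * u).intervalIntegrable _ _),
    intervalIntegral.integral_const_mul, integral_id,
    intervalIntegral.integral_const]
  simp [smul_eq_mul]; ring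

lemma lint_lower1 (t d C : ℝ) (hC : 0 < C) (hd : 0 ≤ d) :
    ENNReal.ofReal (d^2/(2*C)) ≤ ∫⁻ s in Icc t (t + d/C), ENNReal.ofReal (d - C*(s - t)) ∂volume := by
  have hdc : 0 ≤ d / C := by positivity
  have hle : t ≤ t + d/C := by linarith
  have hcont : Continuous fun s : ℝ => d - C*(s - t) := by continuity
  have hint : IntegrableOn (fun s : ℝ => d - C*(s - t)) (Icc t (t + d/C)) volume :=
    hcont.integrableOn_Icc
  have hnn : 0 ≤ᵐ[volume.restrict (Icc t (t + d/C))] fun s : ℝ => d - C*(s - t) := by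
    refine (ae_restrict_iff' measurableSet_Icc).2 (ae_of_all _ fun s hs => ?_)
    simp only [Pi.zero_apply]
    have h2 : s - t ≤ d/C := by linarith [hs.2]
    have : C * (s - t) ≤ C * (d/C) := by nlinarith
    rw [mul_div_cancel₀ _ hC.ne'] at this
    linarith
  rw [← ofReal_integral_eq_lintegral_ofReal hint hnn]
  apply ENNReal.ofReal_le_ofReal
  have h0 : ∫ s in Icc t (t + d/C), (d - C*(s - t)) = ∫ s in t..(t + d/C), (d - C*(s - t)) := by
    rw [intervalIntegral.integral_of_le hle, integral_Icc_eq_integral_Ioc]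
  rw [h0, intervalIntegral.integral_congr
      (g := fun s : ℝ => (d + C*t) - C*s) (fun s _ => by ring),
    gen_lin_int]
  apply le_of_eq
  field_simp
  ring

lemma lint_lower2 (t d C : ℝ) (hC : 0 < C) (hd : 0 ≤ d) :
    ENNReal.ofReal (d^2/(2*C)) ≤ ∫⁻ s in Icc (t - d/C) t, ENNReal.ofReal (d - C*(t - s)) ∂volume := by
  have hdc : 0 ≤ d / C := by positivity
  have hle : t - d/C ≤ t := by linarith
  have hcont : Continuous fun s : ℝ => d - C*(t - s) := by continuity
  have hint : IntegrableOn (fun s : ℝ => d - C*(t - s)) (Icc (t - d/C) t) volume :=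
    hcont.integrableOn_Icc
  have hnn : 0 ≤ᵐ[volume.restrict (Icc (t - d/C) t)] fun s : ℝ => d - C*(t - s) := by
    refine (ae_restrict_iff' measurableSet_Icc).2 (ae_of_all _ fun s hs => ?_)
    simp only [Pi.zero_apply]
    have h2 : t - s ≤ d/C := by linarith [hs.1]
    have : C * (t - s) ≤ C * (d/C) := by nlinarith
    rw [mul_div_cancel₀ _ hC.ne'] at this
    linarith
  rw [← ofReal_integral_eq_lintegral_ofReal hint hnn]
  apply ENNReal.ofReal_le_ofReal
  have h0 : ∫ s in Icc (t - d/C) t, (d - C*(t - s)) = ∫ s in (t - d/C)..t, (d - C*(t - s)) := by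
    rw [intervalIntegral.integral_of_le hle, integral_Icc_eq_integral_Ioc]
  rw [h0, intervalIntegral.integral_congr
      (g := fun s : ℝ => (d - C*t) + C*s) (fun s _ => by ring),
    gen_lin_int']
  apply le_of_eq
  field_simp
  ring

lemma cross_one (κ : Measure (ℝ × ℝ)) [IsProbabilityMeasure κ] :
    ∫⁻ t, κ {q : ℝ × ℝ | q.1 ≤ t ∧ t < q.2} ∂volume
      = ∫⁻ q, ENNReal.ofReal (q.2 - q.1) ∂κ := by
  have hset : ∀ t : ℝ, MeasurableSet {q : ℝ × ℝ | q.1 ≤ t ∧ t < q.2} := fun t =>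
    (measurableSet_le measurable_fst measurable_const).inter
      (measurableSet_lt measurable_const measurable_snd)
  have h1 : ∀ t : ℝ, κ {q : ℝ × ℝ | q.1 ≤ t ∧ t < q.2}
      = ∫⁻ q, ({q : ℝ × ℝ | q.1 ≤ t ∧ t < q.2}).indicator 1 q ∂κ := fun t =>
    (lintegral_indicator_one (hset t)).symm
  simp only [h1]
  have hS : MeasurableSet {p : ℝ × (ℝ × ℝ) | p.2.1 ≤ p.1 ∧ p.1 < p.2.2} :=
    (measurableSet_le measurable_snd.fst measurable_fst).inter
      (measurableSet_lt measurable_fst measurable_snd.snd)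
  have huncurry : uncurry (fun (t : ℝ) (q : ℝ × ℝ) =>
      ({q : ℝ × ℝ | q.1 ≤ t ∧ t < q.2}).indicator (1 : (ℝ × ℝ) → ℝ≥0∞) q)
      = ({p : ℝ × (ℝ × ℝ) | p.2.1 ≤ p.1 ∧ p.1 < p.2.2}).indicator 1 := by
    ext p
    by_cases h : p.2.1 ≤ p.1 ∧ p.1 < p.2.2 <;>
      simp [uncurry, Set.indicator, h]
  rw [lintegral_lintegral_swap (by rw [huncurry]; exact ((measurable_one).indicator hS).aemeasurable)]
  refine lintegral_congr fun q => ?_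
  have : (fun t : ℝ => ({q : ℝ × ℝ | q.1 ≤ t ∧ t < q.2}).indicator (1 : (ℝ × ℝ) → ℝ≥0∞) q)
      = (Ico q.1 q.2).indicator 1 := by
    ext t
    by_cases h : q.1 ≤ t ∧ t < q.2 <;> simp [Set.indicator, h, Set.mem_Ico]
  rw [this, lintegral_indicator_one measurableSet_Ico, Real.volume_Ico]

lemma oneside (κ : Measure (ℝ × ℝ)) [IsProbabilityMeasure κ] :
    ∫⁻ t, κ {q : ℝ × ℝ | q.1 ≤ t ∧ t < q.2} ∂volume ≤ ∫⁻ q, edist q.1 q.2 ∂κ := by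
  rw [cross_one]
  refine lintegral_mono fun q => ?_
  rw [edist_dist, Real.dist_eq]
  exact ENNReal.ofReal_le_ofReal (by cases abs_cases (q.1 - q.2) <;> linarith [abs_nonneg (q.1-q.2)])

lemma oneside' (κ : Measure (ℝ × ℝ)) [IsProbabilityMeasure κ] :
    ∫⁻ t, κ {q : ℝ × ℝ | q.2 ≤ t ∧ t < q.1} ∂volume ≤ ∫⁻ q, edist q.1 q.2 ∂κ := by
  have hswap : Measurable (Prod.swap : ℝ × ℝ → ℝ × ℝ) := measurable_swap
  haveI : IsProbabilityMeasure (κ.map Prod.swap) := Measure.isProbabilityMeasure_map hswap.aemeasurable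
  have h1 : ∀ t : ℝ, κ {q : ℝ × ℝ | q.2 ≤ t ∧ t < q.1}
      = (κ.map Prod.swap) {q : ℝ × ℝ | q.1 ≤ t ∧ t < q.2} := by
    intro t
    have hset : MeasurableSet {q : ℝ × ℝ | q.1 ≤ t ∧ t < q.2} :=
      (measurableSet_le measurable_fst measurable_const).inter
        (measurableSet_lt measurable_const measurable_snd)
    rw [Measure.map_apply hswap hset]
    rfl
  simp only [h1]
  refine (oneside _).trans (le_of_eq ?_)
  rw [lintegral_map (by fun_prop) hswap]
  exact lintegral_congr fun q => edist_comm _ _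

lemma cdf_lip (μ : Measure ℝ) [IsProbabilityMeasure μ] (C : ℝ) (hC : 0 < C)
    (p : ℝ → ℝ≥0∞) (hdens : μ = volume.withDensity p)
    (hbdd : ∀ᵐ x ∂volume, p x ≤ ENNReal.ofReal C) :
    ∀ t s : ℝ, t ≤ s → (μ (Iic s)).toReal - (μ (Iic t)).toReal ≤ C * (s - t) := by
  intro t s hts
  have hsplit : μ (Iic s) = μ (Iic t) + μ (Ioc t s) := by
    rw [← Iic_union_Ioc_eq_Iic hts, measure_union (Iic_disjoint_Ioc le_rfl) measurableSet_Ioc]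
  have h2 : μ (Ioc t s) ≤ ENNReal.ofReal (C * (s - t)) := by
    rw [hdens, withDensity_apply _ measurableSet_Ioc]
    calc ∫⁻ x in Ioc t s, p x ≤ ∫⁻ _x in Ioc t s, ENNReal.ofReal C ∂volume :=
        lintegral_mono_ae (ae_restrict_of_ae hbdd)
      _ = ENNReal.ofReal C * volume (Ioc t s) := by rw [setLIntegral_const]
      _ = ENNReal.ofReal (C * (s - t)) := by
          rw [Real.volume_Ioc, ← ENNReal.ofReal_mul hC.le]
  rw [hsplit, ENNReal.toReal_add (measure_ne_top μ _) (measure_ne_top μ _)]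
  have h3 := ENNReal.toReal_le_of_le_ofReal (mul_nonneg hC.le (sub_nonneg.2 hts)) h2
  linarith

lemma cdf_coupling (κ : Measure (ℝ × ℝ)) [IsProbabilityMeasure κ]
    (μ ν : Measure ℝ) (hκ1 : κ.map Prod.fst = μ) (hκ2 : κ.map Prod.snd = ν) (t : ℝ) :
    (ν (Iic t)).toReal - (μ (Iic t)).toReal ≤ (κ {q : ℝ × ℝ | q.2 ≤ t ∧ t < q.1}).toReal := by
  have hν : ν (Iic t) = κ {q : ℝ × ℝ | q.2 ≤ t} := by
    rw [← hκ2, Measure.map_apply measurable_snd measurableSet_Iic]; rfl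
  have hμ : μ (Iic t) = κ {q : ℝ × ℝ | q.1 ≤ t} := by
    rw [← hκ1, Measure.map_apply measurable_fst measurableSet_Iic]; rfl
  have hsub : {q : ℝ × ℝ | q.2 ≤ t} ⊆ {q : ℝ × ℝ | q.1 ≤ t} ∪ {q : ℝ × ℝ | q.2 ≤ t ∧ t < q.1} := by
    intro q hq
    rcases le_or_gt q.1 t with h | h
    · exact Or.inl h
    · exact Or.inr ⟨hq, h⟩
  have hle : κ {q : ℝ × ℝ | q.2 ≤ t} ≤ κ {q : ℝ × ℝ | q.1 ≤ t} + κ {q : ℝ × ℝ | q.2 ≤ t ∧ t < q.1} :=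
    (measure_mono hsub).trans (measure_union_le _ _)
  rw [hν, hμ]
  have h1 := ENNReal.toReal_mono
    (ENNReal.add_ne_top.2 ⟨measure_ne_top κ _, measure_ne_top κ _⟩) hle
  rw [ENNReal.toReal_add (measure_ne_top κ _) (measure_ne_top κ _)] at h1
  linarith

lemma cdf_coupling' (κ : Measure (ℝ × ℝ)) [IsProbabilityMeasure κ]
    (μ ν : Measure ℝ) (hκ1 : κ.map Prod.fst = μ) (hκ2 : κ.map Prod.snd = ν) (t : ℝ) :
    (μ (Iic t)).toReal - (ν (Iic t)).toReal ≤ (κ {q : ℝ × ℝ | q.1 ≤ t ∧ t < q.2}).toReal := by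
  have hν : ν (Iic t) = κ {q : ℝ × ℝ | q.2 ≤ t} := by
    rw [← hκ2, Measure.map_apply measurable_snd measurableSet_Iic]; rfl
  have hμ : μ (Iic t) = κ {q : ℝ × ℝ | q.1 ≤ t} := by
    rw [← hκ1, Measure.map_apply measurable_fst measurableSet_Iic]; rfl
  have hsub : {q : ℝ × ℝ | q.1 ≤ t} ⊆ {q : ℝ × ℝ | q.2 ≤ t} ∪ {q : ℝ × ℝ | q.1 ≤ t ∧ t < q.2} := by
    intro q hq
    rcases le_or_gt q.2 t with h | h
    · exact Or.inl h
    · exact Or.inr ⟨hq, h⟩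
  have hle : κ {q : ℝ × ℝ | q.1 ≤ t} ≤ κ {q : ℝ × ℝ | q.2 ≤ t} + κ {q : ℝ × ℝ | q.1 ≤ t ∧ t < q.2} :=
    (measure_mono hsub).trans (measure_union_le _ _)
  rw [hν, hμ]
  have h1 := ENNReal.toReal_mono
    (ENNReal.add_ne_top.2 ⟨measure_ne_top κ _, measure_ne_top κ _⟩) hle
  rw [ENNReal.toReal_add (measure_ne_top κ _) (measure_ne_top κ _)] at h1
  linarith
lemma W1_lt_top (μ ν : Measure ℝ) [IsProbabilityMeasure μ] [IsProbabilityMeasure ν]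
    (hμmom : ∫⁻ x, ENNReal.ofReal |x| ∂μ < ⊤) (hνmom : ∫⁻ x, ENNReal.ofReal |x| ∂ν < ⊤) :
    W1 μ ν < ⊤ := by
  have hcoup : (μ.prod ν).map Prod.fst = μ ∧ (μ.prod ν).map Prod.snd = ν := by
    constructor
    · rw [Measure.map_fst_prod]; simp
    · rw [Measure.map_snd_prod]; simp
  have hle : W1 μ ν ≤ ∫⁻ q, edist q.1 q.2 ∂(μ.prod ν) := by
    rw [W1]
    exact iInf_le_of_le (μ.prod ν) (iInf_le _ hcoup)
  refine hle.trans_lt ?_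
  have hb : ∀ q : ℝ × ℝ, edist q.1 q.2 ≤ ENNReal.ofReal |q.1| + ENNReal.ofReal |q.2| := by
    intro q
    rw [edist_dist, Real.dist_eq, ← ENNReal.ofReal_add (abs_nonneg _) (abs_nonneg _)]
    exact ENNReal.ofReal_le_ofReal (abs_sub _ _)
  have e1 : ∫⁻ q : ℝ × ℝ, ENNReal.ofReal |q.1| ∂(μ.prod ν) = ∫⁻ x, ENNReal.ofReal |x| ∂μ := by
    conv_rhs => rw [← hcoup.1]
    rw [lintegral_map (measurable_abs.ennreal_ofReal) measurable_fst]
  have e2 : ∫⁻ q : ℝ × ℝ, ENNReal.ofReal |q.2| ∂(μ.prod ν) = ∫⁻ x, ENNReal.ofReal |x| ∂ν := by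
    conv_rhs => rw [← hcoup.2]
    rw [lintegral_map (measurable_abs.ennreal_ofReal) measurable_snd]
  calc ∫⁻ q, edist q.1 q.2 ∂(μ.prod ν)
      ≤ ∫⁻ q : ℝ × ℝ, (ENNReal.ofReal |q.1| + ENNReal.ofReal |q.2|) ∂(μ.prod ν) :=
        lintegral_mono hb
    _ = ∫⁻ q : ℝ × ℝ, ENNReal.ofReal |q.1| ∂(μ.prod ν)
        + ∫⁻ q : ℝ × ℝ, ENNReal.ofReal |q.2| ∂(μ.prod ν) :=
        lintegral_add_left (measurable_fst.abs.ennreal_ofReal) _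
    _ < ⊤ := by rw [e1, e2]; exact ENNReal.add_lt_top.2 ⟨hμmom, hνmom⟩

/-- If `μ` is a probability measure with finite first moment and a
Lebesgue density bounded by `C > 0`, then for any probability measure `ν` with
finite first moment, `KS(μ,ν) ≤ √(2 C W₁(μ,ν))`. -/
theorem ks_le_sqrt_two_C_W1
    (μ ν : Measure ℝ) [IsProbabilityMeasure μ] [IsProbabilityMeasure ν]
    (hμmom : ∫⁻ x, ENNReal.ofReal |x| ∂μ < ⊤)
    (hνmom : ∫⁻ x, ENNReal.ofReal |x| ∂ν < ⊤)
    (C : ℝ) (hC : 0 < C) (p : ℝ → ℝ≥0∞)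
    (hdens : μ = volume.withDensity p)
    (hbdd : ∀ᵐ x ∂volume, p x ≤ ENNReal.ofReal C) :
    KS μ ν ≤ Real.sqrt (2 * C * (W1 μ ν).toReal) := by
  have hW1 : W1 μ ν < ⊤ := W1_lt_top μ ν hμmom hνmom
  have hM0 : 0 ≤ (W1 μ ν).toReal := ENNReal.toReal_nonneg
  rw [KS]
  refine Real.iSup_le (fun t => ?_) (Real.sqrt_nonneg _)
  set d := |(μ (Set.Iic t)).toReal - (ν (Set.Iic t)).toReal| with hdd
  have hd0 : 0 ≤ d := abs_nonneg _
  have hlip := cdf_lip μ C hC p hdens hbdd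
  have hmono_μ : ∀ a b : ℝ, a ≤ b → (μ (Iic a)).toReal ≤ (μ (Iic b)).toReal := fun a b hab =>
    ENNReal.toReal_mono (measure_ne_top μ _) (measure_mono (Iic_subset_Iic.2 hab))
  have hmono_ν : ∀ a b : ℝ, a ≤ b → (ν (Iic a)).toReal ≤ (ν (Iic b)).toReal := fun a b hab =>
    ENNReal.toReal_mono (measure_ne_top ν _) (measure_mono (Iic_subset_Iic.2 hab))
  have key : ENNReal.ofReal (d^2/(2*C)) ≤ W1 μ ν := by
    rw [W1]
    refine le_iInf fun κ => le_iInf fun hκ => ?_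
    obtain ⟨hκ1, hκ2⟩ := hκ
    haveI hκP : IsProbabilityMeasure κ := by
      constructor
      have h := congrArg (fun m : Measure ℝ => m univ) hκ1
      simp only [Measure.map_apply measurable_fst MeasurableSet.univ, preimage_univ] at h
      rw [h]; exact measure_univ
    rcases le_total ((μ (Iic t)).toReal) ((ν (Iic t)).toReal) with hc | hc
    · have hdeq : d = (ν (Iic t)).toReal - (μ (Iic t)).toReal := by
        rw [hdd, abs_sub_comm, abs_of_nonneg (sub_nonneg.2 hc)]
      calc ENNReal.ofReal (d^2/(2*C))
          ≤ ∫⁻ s in Icc t (t + d/C), ENNReal.ofReal (d - C*(s - t)) ∂volume :=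
            lint_lower1 t d C hC hd0
        _ ≤ ∫⁻ s in Icc t (t + d/C), κ {q : ℝ × ℝ | q.2 ≤ s ∧ s < q.1} ∂volume := by
            refine lintegral_mono_ae ((ae_restrict_iff' measurableSet_Icc).2
              (ae_of_all _ fun s hs => ?_))
            have h3 := hlip t s hs.1
            have h4 := hmono_ν t s hs.1
            have h2 := cdf_coupling κ μ ν hκ1 hκ2 s
            exact ENNReal.ofReal_le_of_le_toReal (by linarith)
        _ ≤ ∫⁻ s, κ {q : ℝ × ℝ | q.2 ≤ s ∧ s < q.1} ∂volume := setLIntegral_le_lintegral _ _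
        _ ≤ ∫⁻ q, edist q.1 q.2 ∂κ := oneside' κ
    · have hdeq : d = (μ (Iic t)).toReal - (ν (Iic t)).toReal := by
        rw [hdd, abs_of_nonneg (sub_nonneg.2 hc)]
      calc ENNReal.ofReal (d^2/(2*C))
          ≤ ∫⁻ s in Icc (t - d/C) t, ENNReal.ofReal (d - C*(t - s)) ∂volume :=
            lint_lower2 t d C hC hd0
        _ ≤ ∫⁻ s in Icc (t - d/C) t, κ {q : ℝ × ℝ | q.1 ≤ s ∧ s < q.2} ∂volume := by
            refine lintegral_mono_ae ((ae_restrict_iff' measurableSet_Icc).2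
              (ae_of_all _ fun s hs => ?_))
            have h3 := hlip s t hs.2
            have h4 := hmono_ν s t hs.2
            have h2 := cdf_coupling' κ μ ν hκ1 hκ2 s
            exact ENNReal.ofReal_le_of_le_toReal (by linarith)
        _ ≤ ∫⁻ s, κ {q : ℝ × ℝ | q.1 ≤ s ∧ s < q.2} ∂volume := setLIntegral_le_lintegral _ _
        _ ≤ ∫⁻ q, edist q.1 q.2 ∂κ := oneside κ
  have hfin := ENNReal.toReal_mono hW1.ne key
  rw [ENNReal.toReal_ofReal (by positivity)] at hfin
  have hsq : d^2 ≤ 2*C*(W1 μ ν).toReal := by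
    rw [div_le_iff₀ (by positivity)] at hfin
    linarith
  calc d ≤ Real.sqrt (d^2) := by rw [Real.sqrt_sq hd0]
    _ ≤ Real.sqrt (2*C*(W1 μ ν).toReal) := Real.sqrt_le_sqrt hsq
end

section
/- Let μ be a finite signed Borel measure on [0, B] (B = 1/(1−γ)) with μ([0,B]) = 0, admitting a Lebesgue density bounded in absolute value by L, and with W₁-type norm ‖μ‖_{W₁} := sup{|∫ f dμ| : f 1-Lipschitz} finite. Then sup_{x} |μ((-∞, x])| ≤ √(2 · L · ‖μ‖_{W₁}). -/
/-!
Pair the density `h` with the 1-Lipschitz ramp that equals `δ` on `(-∞, x]` and falls linearly to `0` on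
`[x, x + δ]`. The pairing is `δ · μ(-∞, x]` up to the contribution of the slope, which is at most
`L δ² / 2`; hence `δ |μ(-∞, x]| - L δ² / 2 ≤ ‖μ‖_{W₁}`, and the choice `δ = |μ(-∞, x]| / L` gives
`μ(-∞, x]² ≤ 2 L ‖μ‖_{W₁}`.
-/

open MeasureTheory Set

noncomputable def cutoffRamp (x δ y : ℝ) : ℝ := min δ (max (x + δ - y) 0)

section cutoffRamp

variable {x δ y : ℝ}

lemma lipschitzWith_cutoffRamp (x δ : ℝ) : LipschitzWith 1 (cutoffRamp x δ) :=
  ((IsometryEquiv.subLeft (x + δ)).isometry.lipschitz.max_const 0).const_min δ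

lemma cutoffRamp_of_le (hδ : 0 ≤ δ) (hy : y ≤ x) : cutoffRamp x δ y = δ := by
  rw [cutoffRamp, max_eq_left (by linarith), min_eq_left (by linarith)]

lemma cutoffRamp_of_mem_Icc (hy : y ∈ Icc x (x + δ)) : cutoffRamp x δ y = x + δ - y := by
  rw [cutoffRamp, max_eq_left (by linarith [hy.2]), min_eq_right (by linarith [hy.1])]

lemma cutoffRamp_of_add_le (hδ : 0 ≤ δ) (hy : x + δ ≤ y) : cutoffRamp x δ y = 0 := by
  rw [cutoffRamp, max_eq_right (by linarith), min_eq_right hδ]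

lemma abs_cutoffRamp_le (hδ : 0 ≤ δ) : |cutoffRamp x δ y| ≤ δ := by
  rw [cutoffRamp, abs_of_nonneg (le_min hδ (le_max_right _ _))]
  exact min_le_left _ _

end cutoffRamp

lemma abs_integral_cutoffRamp_mul_sub_le {h : ℝ → ℝ} {L δ : ℝ} (hint : Integrable h)
    (hbdd : ∀ y, |h y| ≤ L) (hδ : 0 ≤ δ) (x : ℝ) :
    |(∫ y, cutoffRamp x δ y * h y) - δ * ∫ y in Iic x, h y| ≤ L * δ ^ 2 / 2 := by
  have hfh : Integrable (fun y => cutoffRamp x δ y * h y) :=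
    hint.bdd_mul (lipschitzWith_cutoffRamp x δ).continuous.aestronglyMeasurable
      (.of_forall fun _ => abs_cutoffRamp_le hδ)
  have hIic : ∫ y in Iic x, cutoffRamp x δ y * h y = δ * ∫ y in Iic x, h y := by
    rw [← integral_const_mul]
    exact setIntegral_congr_fun measurableSet_Iic fun y hy => by rw [cutoffRamp_of_le hδ hy]
  have hIoi : ∫ y in Ioi x, cutoffRamp x δ y * h y = ∫ y in x..x + δ, cutoffRamp x δ y * h y := by
    rw [intervalIntegral.integral_of_le (by linarith)]
    refine setIntegral_eq_of_subset_of_forall_sdiff_eq_zero measurableSet_Ioi Ioc_subset_Ioi_self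
      fun y hy => ?_
    have hxy : x + δ ≤ y := not_lt.1 fun hlt => hy.2 ⟨hy.1, hlt.le⟩
    rw [cutoffRamp_of_add_le hδ hxy, zero_mul]
  have hbound : ‖∫ y in x..x + δ, cutoffRamp x δ y * h y‖ ≤ ∫ y in x..x + δ, (x + δ - y) * L := by
    refine intervalIntegral.norm_integral_le_of_norm_le (by linarith) (.of_forall fun y hy => ?_)
      (Continuous.intervalIntegrable (by fun_prop) _ _)
    have hy' : 0 ≤ x + δ - y := by linarith [hy.2]
    rw [Real.norm_eq_abs, abs_mul, cutoffRamp_of_mem_Icc (Ioc_subset_Icc_self hy),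
      abs_of_nonneg hy']
    exact mul_le_mul_of_nonneg_left (hbdd y) hy'
  have hramp : ∫ y in x..x + δ, (x + δ - y) * L = L * δ ^ 2 / 2 := by
    rw [intervalIntegral.integral_mul_const, intervalIntegral.integral_comp_sub_left (fun t => t),
      integral_id]
    ring
  rw [← intervalIntegral.integral_Iic_add_Ioi hfh.integrableOn hfh.integrableOn, hIic,
    add_sub_cancel_left, hIoi, ← hramp]
  exact hbound

theorem ks_norm_le_sqrt_of_signed_general
    (L : ℝ) (hL : 0 < L)
    (h : ℝ → ℝ) (hint : Integrable h)
    (hbdd : ∀ x, |h x| ≤ L)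
    (hW : BddAbove {r : ℝ | ∃ f : ℝ → ℝ, LipschitzWith 1 f ∧ r = |∫ x, f x * h x|}) :
    ∀ x : ℝ, |∫ y in Set.Iic x, h y| ≤
      Real.sqrt (2 * L *
        sSup {r : ℝ | ∃ f : ℝ → ℝ, LipschitzWith 1 f ∧ r = |∫ x, f x * h x|}) := by
  intro x
  set W := sSup {r : ℝ | ∃ f : ℝ → ℝ, LipschitzWith 1 f ∧ r = |∫ x, f x * h x|}
  set a := ∫ y in Iic x, h y
  set δ := |a| / L
  have hδ : 0 ≤ δ := by positivity
  have hdev := abs_integral_cutoffRamp_mul_sub_le hint hbdd hδ x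
  have hpair : |∫ y, cutoffRamp x δ y * h y| ≤ W :=
    le_csSup hW ⟨_, lipschitzWith_cutoffRamp x δ, rfl⟩
  have hlower : δ * |a| - L * δ ^ 2 / 2 ≤ W := by
    have := abs_sub_abs_le_abs_sub (δ * a) (∫ y, cutoffRamp x δ y * h y)
    rw [abs_sub_comm, abs_mul, abs_of_nonneg hδ] at this
    linarith
  have hopt : δ * |a| - L * δ ^ 2 / 2 = a ^ 2 / (2 * L) := by
    rw [← sq_abs a]
    simp only [δ]
    field_simp
    ring
  refine Real.abs_le_sqrt ?_
  rw [hopt, div_le_iff₀ (by positivity)] at hlower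
  linarith

/-- Let `μ` be a finite signed measure on `[0, B]` (`B = 1/(1-γ)`)
of total mass zero, represented by an integrable Lebesgue density `h` supported
in `[0, B]` with `|h| ≤ L`, and with finite `W₁`-type norm
`‖μ‖_{W₁} = sup {|∫ f dμ| : f 1-Lipschitz}`. Then
`sup_x |μ((-∞, x])| ≤ √(2 L ‖μ‖_{W₁})`. -/
theorem ks_norm_le_sqrt_of_signed
    (γ : ℝ) (hγ : γ ∈ Set.Ioo (0 : ℝ) 1) (L : ℝ) (hL : 0 < L)
    (h : ℝ → ℝ) (hint : Integrable h)
    (hmass : (∫ x, h x) = 0)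
    (hsupp : ∀ x, x ∉ Set.Icc (0 : ℝ) (1 / (1 - γ)) → h x = 0)
    (hbdd : ∀ x, |h x| ≤ L)
    (hW : BddAbove {r : ℝ | ∃ f : ℝ → ℝ, LipschitzWith 1 f ∧ r = |∫ x, f x * h x|}) :
    ∀ x : ℝ, |∫ y in Set.Iic x, h y| ≤
      Real.sqrt (2 * L *
        sSup {r : ℝ | ∃ f : ℝ → ℝ, LipschitzWith 1 f ∧ r = |∫ x, f x * h x|}) :=
  ks_norm_le_sqrt_of_signed_general L hL h hint hbdd hW
end

section
/- Let γ ∈ (0,1), and let T be the distributional Bellman operator on the finite product Δ([0,1/(1−γ)])^S of probability-measure vectors defined by [Tη](s) = ∑_{a,s'} π(a|s) P(s'|s,a) ∫₀¹ (b_{r,γ})_# η(s') 𝒫_R(dr|s,a), where b_{r,γ}(x) = r + γx. Then T is a γ-contraction in the metric sup_{s∈S} W₁(η(s), η'(s)): sup_s W₁([Tη](s), [Tη'](s)) ≤ γ · sup_s W₁(η(s), η'(s)). -/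
open MeasureTheory Set
open scoped ENNReal

/-- The distributional Bellman operator:
`[Tη](s) = ∑_{a,s'} π(a|s) P(s'|s,a) ∫ (b_{r,γ})_# η(s') 𝒫_R(dr|s,a)`. -/
noncomputable def bellman {S A : Type*} [Fintype S] [Fintype A]
    (γ : ℝ) (pol : S → A → ℝ≥0∞) (P : S → A → S → ℝ≥0∞)
    (R : S → A → Measure ℝ) (η : S → Measure ℝ) : S → Measure ℝ :=
  fun s => ∑ a : A, ∑ s' : S, (pol s a * P s a s') •
    ((R s a).bind (fun r => (η s').map (fun x => r + γ * x)))

/-!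
`W1` is subadditive on sums of measures and homogeneous under finite scalars, so
`W1([Tη](s), [Tη'](s))` is at most the `π(a|s) P(s'|s,a)`-weighted sum of the distances between
the reward mixtures of `(b_{r,γ})_# η(s')` and `(b_{r,γ})_# η'(s')`. Pushing any coupling of
`η(s')` and `η'(s')` forward along `b_{r,γ} × b_{r,γ}` and mixing over `r` couples those two
mixtures, and as `b_{r,γ}` is `γ`-Lipschitz its cost is at most `γ` times the original one.
-/

open Function
open scoped NNReal

namespace MeasureTheory.Measure

variable {α β γ : Type*} [MeasurableSpace α] [MeasurableSpace β] [MeasurableSpace γ]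

theorem measurable_map_of_uncurry (μ : Measure β) [SFinite μ] {f : α → β → γ}
    (hf : Measurable (uncurry f)) : Measurable fun a => μ.map (f a) := by
  have hfa : ∀ a, Measurable (f a) := fun a => hf.comp measurable_prodMk_left
  refine measurable_of_measurable_coe _ fun t ht => ?_
  simp only [map_apply (hfa _) ht]
  exact measurable_measure_prodMk_left (hf ht)

theorem map_bind (m : Measure α) {f : α → Measure β} (hf : Measurable f) {g : β → γ}
    (hg : Measurable g) : (m.bind f).map g = m.bind fun a => (f a).map g := by
  ext t ht
  rw [map_apply hg ht, bind_apply (hg ht) hf.aemeasurable,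
    bind_apply (f := fun a => (f a).map g) ht ((measurable_map g hg).comp hf).aemeasurable]
  simp_rw [map_apply hg ht]

theorem map_fst_map_prodMap (κ : Measure (β × β)) {g : β → γ} (hg : Measurable g) :
    (κ.map (Prod.map g g)).map Prod.fst = (κ.map Prod.fst).map g := by
  rw [map_map measurable_fst (hg.prodMap hg), map_map hg measurable_fst]
  rfl

theorem map_snd_map_prodMap (κ : Measure (β × β)) {g : β → γ} (hg : Measurable g) :
    (κ.map (Prod.map g g)).map Prod.snd = (κ.map Prod.snd).map g := by
  rw [map_map measurable_snd (hg.prodMap hg), map_map hg measurable_snd]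
  rfl

end MeasureTheory.Measure

section W1

variable {μ ν μ' ν' : Measure ℝ}

theorem W1_le_lintegral {κ : Measure (ℝ × ℝ)} (h₁ : κ.map Prod.fst = μ)
    (h₂ : κ.map Prod.snd = ν) : W1 μ ν ≤ ∫⁻ q, edist q.1 q.2 ∂κ :=
  iInf₂_le κ ⟨h₁, h₂⟩

theorem W1_zero : W1 0 0 = 0 :=
  nonpos_iff_eq_zero.1 <| (W1_le_lintegral (Measure.map_zero _) (Measure.map_zero _)).trans_eq
    (lintegral_zero_measure _)

theorem W1_le_mul_of_forall_coupling {c : ℝ≥0∞} (hc₀ : c ≠ 0) (hc : c ≠ ⊤)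
    (h : ∀ κ : Measure (ℝ × ℝ), κ.map Prod.fst = μ → κ.map Prod.snd = ν →
      W1 μ' ν' ≤ c * ∫⁻ q, edist q.1 q.2 ∂κ) :
    W1 μ' ν' ≤ c * W1 μ ν := by
  simp_rw [W1, ENNReal.mul_iInf_of_ne hc₀ hc]
  exact le_iInf₂ fun κ hκ => h κ hκ.1 hκ.2

theorem W1_add_le (μ₁ μ₂ ν₁ ν₂ : Measure ℝ) :
    W1 (μ₁ + μ₂) (ν₁ + ν₂) ≤ W1 μ₁ ν₁ + W1 μ₂ ν₂ :=
  ENNReal.le_iInf₂_add_iInf₂ fun κ₁ h₁ κ₂ h₂ => by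
    rw [← lintegral_add_measure]
    exact W1_le_lintegral (by rw [Measure.map_add _ _ measurable_fst, h₁.1, h₂.1])
      (by rw [Measure.map_add _ _ measurable_snd, h₁.2, h₂.2])

theorem W1_smul_le {c : ℝ≥0∞} (hc : c ≠ ⊤) (μ ν : Measure ℝ) :
    W1 (c • μ) (c • ν) ≤ c * W1 μ ν := by
  rcases eq_or_ne c 0 with rfl | hc₀
  · simp [W1_zero]
  refine W1_le_mul_of_forall_coupling hc₀ hc fun κ h₁ h₂ => ?_
  rw [← smul_eq_mul, ← lintegral_smul_measure]
  exact W1_le_lintegral (by rw [Measure.map_smul, h₁]) (by rw [Measure.map_smul, h₂])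

theorem W1_finset_sum_le {ι : Type*} (s : Finset ι) (μ ν : ι → Measure ℝ) :
    W1 (∑ i ∈ s, μ i) (∑ i ∈ s, ν i) ≤ ∑ i ∈ s, W1 (μ i) (ν i) := by
  classical
  induction s using Finset.induction_on with
  | empty => simp [W1_zero]
  | insert i s hi ih =>
    simp only [Finset.sum_insert hi]
    exact (W1_add_le _ _ _ _).trans (by gcongr)

theorem W1_bind_map_le_of_lipschitzWith {α : Type*} [MeasurableSpace α] (m : Measure α)
    [IsProbabilityMeasure m] {f : α → ℝ → ℝ} {K : ℝ≥0} (hK₀ : K ≠ 0)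
    (hf : Measurable (uncurry f)) (hK : ∀ a, LipschitzWith K (f a))
    (μ ν : Measure ℝ) [IsFiniteMeasure μ] :
    W1 (m.bind fun a => μ.map (f a)) (m.bind fun a => ν.map (f a)) ≤ K * W1 μ ν := by
  refine W1_le_mul_of_forall_coupling (by simpa using hK₀) ENNReal.coe_ne_top
    fun κ h₁ h₂ => ?_
  have : IsFiniteMeasure (κ.map Prod.fst) := h₁ ▸ ‹_›
  have : IsFiniteMeasure κ := Measure.isFiniteMeasure_of_map measurable_fst.aemeasurable
  have hfa : ∀ a, Measurable (f a) := fun a => hf.comp measurable_prodMk_left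
  have hcoupling : Measurable fun a => κ.map (Prod.map (f a) (f a)) :=
    Measure.measurable_map_of_uncurry κ (f := fun a => Prod.map (f a) (f a)) <|
      (hf.comp (measurable_fst.prodMk (measurable_fst.comp measurable_snd))).prodMk
        (hf.comp (measurable_fst.prodMk (measurable_snd.comp measurable_snd)))
  have hedist : Measurable fun q : ℝ × ℝ => edist q.1 q.2 :=
    measurable_fst.edist measurable_snd
  calc W1 (m.bind fun a => μ.map (f a)) (m.bind fun a => ν.map (f a))
      ≤ ∫⁻ q, edist q.1 q.2 ∂(m.bind fun a => κ.map (Prod.map (f a) (f a))) := by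
        refine W1_le_lintegral ?_ ?_
        · simp_rw [Measure.map_bind _ hcoupling measurable_fst,
            Measure.map_fst_map_prodMap _ (hfa _), h₁]
        · simp_rw [Measure.map_bind _ hcoupling measurable_snd,
            Measure.map_snd_map_prodMap _ (hfa _), h₂]
    _ = ∫⁻ a, ∫⁻ q, edist (f a q.1) (f a q.2) ∂κ ∂m := by
        rw [Measure.lintegral_bind hcoupling.aemeasurable hedist.aemeasurable]
        simp_rw [lintegral_map hedist ((hfa _).prodMap (hfa _)), Prod.map_fst, Prod.map_snd]
    _ ≤ ∫⁻ _, K * ∫⁻ q, edist q.1 q.2 ∂κ ∂m := by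
        gcongr with a
        rw [← lintegral_const_mul _ hedist]
        exact lintegral_mono fun q => hK a q.1 q.2
    _ = K * ∫⁻ q, edist q.1 q.2 ∂κ := by simp

end W1

theorem bellman_contraction_W1_general
    {S A : Type*} [Fintype S] [Fintype A]
    (γ : ℝ) (hγ : γ ∈ Set.Ioo (0 : ℝ) 1)
    (pol : S → A → ℝ≥0∞) (hpol : ∀ s, ∑ a : A, pol s a = 1)
    (P : S → A → S → ℝ≥0∞) (hP : ∀ s a, ∑ s' : S, P s a s' = 1)
    (R : S → A → Measure ℝ) (hRprob : ∀ s a, IsProbabilityMeasure (R s a))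
    (η η' : S → Measure ℝ)
    (hη : ∀ s, IsProbabilityMeasure (η s)) :
    (⨆ s : S, W1 (bellman γ pol P R η s) (bellman γ pol P R η' s)) ≤
      ENNReal.ofReal γ * ⨆ s : S, W1 (η s) (η' s) := by
  have hγ₀ : γ.toNNReal ≠ 0 := by simpa using hγ.1
  have hb : ∀ r, LipschitzWith γ.toNNReal fun x : ℝ => r + γ * x := fun r =>
    LipschitzWith.of_dist_le_mul fun x y => by
      rw [Real.coe_toNNReal _ hγ.1.le, Real.dist_eq, Real.dist_eq, add_sub_add_left_eq_sub,
        ← mul_sub, abs_mul, abs_of_pos hγ.1]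
  have hbm : Measurable (uncurry fun r x : ℝ => r + γ * x) := by fun_prop
  have hw : ∀ s a s', pol s a * P s a s' ≠ ⊤ := fun s a s' =>
    ENNReal.mul_ne_top (ENNReal.sum_ne_top.1 (by simp [hpol s]) a (Finset.mem_univ _))
      (ENNReal.sum_ne_top.1 (by simp [hP s a]) s' (Finset.mem_univ _))
  refine iSup_le fun s => ?_
  calc W1 (bellman γ pol P R η s) (bellman γ pol P R η' s)
      ≤ ∑ a, ∑ s', pol s a * P s a s' * W1 ((R s a).bind fun r => (η s').map (r + γ * ·))
          ((R s a).bind fun r => (η' s').map (r + γ * ·)) :=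
        (W1_finset_sum_le _ _ _).trans <| Finset.sum_le_sum fun a _ =>
          (W1_finset_sum_le _ _ _).trans <| Finset.sum_le_sum fun s' _ =>
            W1_smul_le (hw s a s') _ _
    _ ≤ ∑ a, ∑ s', pol s a * P s a s' * (ENNReal.ofReal γ * ⨆ s, W1 (η s) (η' s)) := by
        gcongr with a _ s' _
        exact (W1_bind_map_le_of_lipschitzWith _ hγ₀ hbm hb _ _).trans
          (mul_le_mul' le_rfl (le_iSup (fun s => W1 (η s) (η' s)) s'))
    _ = ENNReal.ofReal γ * ⨆ s, W1 (η s) (η' s) := by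
        simp_rw [← Finset.sum_mul, ← Finset.mul_sum, hP, mul_one, hpol, one_mul]

/-- The distributional Bellman operator is a `γ`-contraction with
respect to the supremum 1-Wasserstein metric on vectors of probability measures
supported on `[0, 1/(1-γ)]`. -/
theorem bellman_contraction_W1
    {S A : Type*} [Fintype S] [Fintype A] [Nonempty S] [Nonempty A]
    (γ : ℝ) (hγ : γ ∈ Set.Ioo (0 : ℝ) 1)
    (pol : S → A → ℝ≥0∞) (hpol : ∀ s, ∑ a : A, pol s a = 1)
    (P : S → A → S → ℝ≥0∞) (hP : ∀ s a, ∑ s' : S, P s a s' = 1)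
    (R : S → A → Measure ℝ) (hRprob : ∀ s a, IsProbabilityMeasure (R s a))
    (hRsupp : ∀ s a, R s a (Set.Icc (0 : ℝ) 1)ᶜ = 0)
    (η η' : S → Measure ℝ)
    (hη : ∀ s, IsProbabilityMeasure (η s)) (hη' : ∀ s, IsProbabilityMeasure (η' s))
    (hηsupp : ∀ s, η s (Set.Icc (0 : ℝ) (1 / (1 - γ)))ᶜ = 0)
    (hη'supp : ∀ s, η' s (Set.Icc (0 : ℝ) (1 / (1 - γ)))ᶜ = 0) :
    (⨆ s : S, W1 (bellman γ pol P R η s) (bellman γ pol P R η' s)) ≤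
      ENNReal.ofReal γ * ⨆ s : S, W1 (η s) (η' s) :=
  bellman_contraction_W1_general γ hγ pol hpol P hP R hRprob η η' hη
end
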